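/- Let η > 0, g ∈ H^1, Γ ⊂ ℕ infinite, and T : SL^∞ → SL^∞ a bounded linear operator. Then there exists an infinite set Λ ⊂ Γ such that sup_{‖f‖_{SL^∞} ≤ 1} |⟨T P_Λ f, g⟩| ≤ η ‖g‖_{H^1}, where P_Λ is the norm-one projection onto the Haar levels indexed by Λ. -/

import Mathlib

/- Setup: dyadic intervals on [0,1), L^∞-normalized Haar coefficients, the SL^∞
square-function norm, the dyadic H^1 norm, and the L² pairing, all expressed on
the space `Dy → ℝ` of Haar coefficient sequences. -/

open MeasureTheory Filter ENNReal

noncomputable section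

/-- Dyadic intervals, encoded as pairs (n, k) with k < 2^n. -/
abbrev Dy := {p : ℕ × ℕ // p.2 < 2 ^ p.1}

/-- The level (frequency) of a dyadic interval. -/
def dlev (I : Dy) : ℕ := I.val.1

/-- The dyadic interval [k/2^n, (k+1)/2^n) as a subset of ℝ. -/
def dint (I : Dy) : Set ℝ :=
  Set.Ico ((I.val.2 : ℝ) / 2 ^ I.val.1) ((I.val.2 + 1 : ℝ) / 2 ^ I.val.1)

/-- The length |I| = 2^{-n} of a dyadic interval. -/
def dlen (I : Dy) : ℝ := ((2 : ℝ) ^ I.val.1)⁻¹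

/-- The square function (Σ_I a_I² 1_I(x)) of the Haar series with coefficients `a`. -/
def sqFn (a : Dy → ℝ) (x : ℝ) : ℝ≥0∞ :=
  ∑' I : Dy, Set.indicator (dint I) (fun _ => ENNReal.ofReal ((a I) ^ 2)) x

/-- The SL^∞ norm: ‖Σ a_I h_I‖ = sup_x (Σ a_I² 1_I(x))^{1/2}. -/
def slNorm (a : Dy → ℝ) : ℝ≥0∞ := ⨆ x : ℝ, sqFn a x ^ (1 / 2 : ℝ)

/-- The dyadic H^1 norm: ∫₀¹ (Σ a_I² 1_I(x))^{1/2} dx. -/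
def h1Norm (a : Dy → ℝ) : ℝ≥0∞ := ∫⁻ x in Set.Ico (0 : ℝ) 1, sqFn a x ^ (1 / 2 : ℝ)

/-- The L² pairing ⟨f, g⟩ = Σ_I a_I b_I |I| of two Haar series. -/
def pairing (a b : Dy → ℝ) : ℝ := ∑' I : Dy, a I * b I * dlen I


/-- The coordinate projection P_Λ onto the Haar levels indexed by Λ. -/
def levProj (Λ : Set ℕ) (a : Dy → ℝ) : Dy → ℝ :=
  fun I => Set.indicator Λ (fun _ => a I) (dlev I)

/- If the lemma failed for Γ, every infinite Λ ⊆ Γ would carry a unit vector f with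
⟨T P_Λ f, g⟩ > η ‖g‖_{H^1} (after a sign change). Split Γ into k disjoint infinite sets Λ_j and
add the corresponding vectors: disjointness of the levels makes the square functions add, so
F = Σ_j P_{Λ_j} f_j has ‖F‖_{SL^∞} ≤ √k, while ⟨T F, g⟩ > k η ‖g‖_{H^1}. Duality gives
⟨T F, g⟩ ≤ C √k ‖g‖_{H^1}, which is impossible once k η² > C². -/

open Function

theorem ENNReal.inner_le_Lp_mul_Lq_tsum {ι : Type*} (f g : ι → ℝ≥0∞) {p q : ℝ}
    (hpq : p.HolderConjugate q) :
    ∑' i, f i * g i ≤ (∑' i, f i ^ p) ^ (1 / p) * (∑' i, g i ^ q) ^ (1 / q) := by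
  rw [ENNReal.tsum_eq_iSup_sum]
  refine iSup_le fun s => (ENNReal.inner_le_Lp_mul_Lq s f g hpq).trans ?_
  gcongr
  · exact one_div_nonneg.mpr hpq.nonneg
  · exact ENNReal.sum_le_tsum s
  · exact one_div_nonneg.mpr hpq.symm.nonneg
  · exact ENNReal.sum_le_tsum s

theorem Set.Infinite.exists_pairwise_disjoint_infinite_subsets {α : Type*} {s : Set α}
    (hs : s.Infinite) (k : ℕ) :
    ∃ Λ : Fin k → Set α, (∀ j, Λ j ⊆ s) ∧ (∀ j, (Λ j).Infinite) ∧ Pairwise (Disjoint on Λ) := by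
  let e : ℕ → α := fun n => hs.natEmbedding s n
  have he : Function.Injective e := Subtype.val_injective.comp (hs.natEmbedding s).injective
  refine ⟨fun j => e '' {n | n % k = j}, ?_, fun j => ?_, fun j j' hjj' => ?_⟩
  · rintro j _ ⟨n, -, rfl⟩
    exact (hs.natEmbedding s n).2
  · exact Set.Infinite.image he.injOn
      (Nat.frequently_atTop_iff_infinite.mp (Nat.frequently_mod_eq j.2))
  · refine (Set.disjoint_image_iff he).mpr (Set.disjoint_left.mpr ?_)
    intro n hn hn'
    exact hjj' (Fin.ext (hn.symm.trans hn'))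

lemma dlen_pos (I : Dy) : 0 < dlen I := by unfold dlen; positivity

lemma dint_subset_Ico (I : Dy) : dint I ⊆ Set.Ico (0 : ℝ) 1 := by
  obtain ⟨⟨n, k⟩, hk⟩ := I
  rintro x ⟨hlo, hhi⟩
  refine ⟨le_trans (by positivity) hlo, hhi.trans_le ?_⟩
  rw [div_le_one (by positivity)]
  exact_mod_cast hk

lemma measurableSet_dint (I : Dy) : MeasurableSet (dint I) := measurableSet_Ico

lemma volume_dint (I : Dy) : volume (dint I) = ENNReal.ofReal (dlen I) := by
  obtain ⟨⟨n, k⟩, hk⟩ := I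
  simp only [dint, dlen, Real.volume_Ico]
  congr 1
  field_simp
  ring

lemma sqFn_mono {a b : Dy → ℝ} (h : ∀ I, a I ^ 2 ≤ b I ^ 2) (x : ℝ) : sqFn a x ≤ sqFn b x := by
  refine ENNReal.tsum_le_tsum fun I => Set.indicator_le_indicator ?_
  exact ENNReal.ofReal_le_ofReal (h I)

lemma sqFn_neg (a : Dy → ℝ) : sqFn (-a) = sqFn a := by
  funext x
  simp only [sqFn, Pi.neg_apply, neg_sq]

lemma slNorm_neg (a : Dy → ℝ) : slNorm (-a) = slNorm a := by
  simp only [slNorm, sqFn_neg]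

lemma slNorm_mono {a b : Dy → ℝ} (h : ∀ I, a I ^ 2 ≤ b I ^ 2) : slNorm a ≤ slNorm b :=
  iSup_mono fun x => ENNReal.rpow_le_rpow (sqFn_mono h x) (by norm_num)

lemma sqrt_sqFn_le_slNorm (a : Dy → ℝ) (x : ℝ) : sqFn a x ^ (1 / 2 : ℝ) ≤ slNorm a :=
  le_iSup (fun x => sqFn a x ^ (1 / 2 : ℝ)) x

lemma slNorm_sq (a : Dy → ℝ) : slNorm a ^ 2 = ⨆ x, sqFn a x := by
  rw [slNorm, ENNReal.iSup_pow_of_ne_zero two_ne_zero]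
  congr 1 with x
  rw [← ENNReal.rpow_natCast, ← ENNReal.rpow_mul]
  norm_num

section Duality

lemma tsum_indicator_abs_mul_le (a b : Dy → ℝ) (x : ℝ) :
    ∑' I, (dint I).indicator (fun _ => ENNReal.ofReal |a I * b I|) x
      ≤ sqFn a x ^ (1 / 2 : ℝ) * sqFn b x ^ (1 / 2 : ℝ) := by
  have hpq : (2 : ℝ).HolderConjugate 2 := Real.HolderConjugate.two_two
  have hsqrt : ∀ c : ℝ, ENNReal.ofReal (c ^ 2) ^ (1 / 2 : ℝ) = ENNReal.ofReal |c| := fun c => by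
    rw [ENNReal.ofReal_rpow_of_nonneg (sq_nonneg c) (by norm_num), ← Real.sqrt_eq_rpow,
      Real.sqrt_sq_eq_abs]
  set u := fun (c : Dy → ℝ) (I : Dy) => (dint I).indicator (fun _ => ENNReal.ofReal |c I|) x
  have hterm : ∀ I, (dint I).indicator (fun _ => ENNReal.ofReal |a I * b I|) x
      = u a I * u b I := fun I => by
    by_cases hx : x ∈ dint I
    · simp [u, hx, abs_mul, ENNReal.ofReal_mul]
    · simp [u, hx]
  have hsq : ∀ c I, u c I ^ (2 : ℝ) = (dint I).indicator (fun _ => ENNReal.ofReal (c I ^ 2)) x :=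
    fun c I => by
      by_cases hx : x ∈ dint I
      · simp only [u, Set.indicator_of_mem hx, ← hsqrt (c I), ← ENNReal.rpow_mul]
        norm_num
      · simp [u, hx]
  calc ∑' I, (dint I).indicator (fun _ => ENNReal.ofReal |a I * b I|) x
      = ∑' I, u a I * u b I := tsum_congr hterm
    _ ≤ (∑' I, u a I ^ (2 : ℝ)) ^ (1 / 2 : ℝ) * (∑' I, u b I ^ (2 : ℝ)) ^ (1 / 2 : ℝ) :=
        ENNReal.inner_le_Lp_mul_Lq_tsum _ _ hpq
    _ = sqFn a x ^ (1 / 2 : ℝ) * sqFn b x ^ (1 / 2 : ℝ) := by simp only [hsq, sqFn]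

lemma ofReal_abs_mul_dlen_eq_lintegral (c : ℝ) (I : Dy) :
    ENNReal.ofReal |c * dlen I|
      = ∫⁻ x in Set.Ico (0 : ℝ) 1, (dint I).indicator (fun _ => ENNReal.ofReal |c|) x := by
  rw [lintegral_indicator_const (measurableSet_dint I),
    Measure.restrict_apply (measurableSet_dint I),
    Set.inter_eq_self_of_subset_left (dint_subset_Ico I), volume_dint,
    ← ENNReal.ofReal_mul (abs_nonneg _), abs_mul, abs_of_pos (dlen_pos I)]

lemma tsum_ofReal_abs_le_slNorm_mul_h1Norm (a b : Dy → ℝ) :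
    ∑' I, ENNReal.ofReal |a I * b I * dlen I| ≤ slNorm a * h1Norm b := by
  calc ∑' I, ENNReal.ofReal |a I * b I * dlen I|
      = ∫⁻ x in Set.Ico (0 : ℝ) 1,
          ∑' I, (dint I).indicator (fun _ => ENNReal.ofReal |a I * b I|) x := by
        simp_rw [ofReal_abs_mul_dlen_eq_lintegral]
        exact (lintegral_tsum fun I =>
          (measurable_const.indicator (measurableSet_dint I)).aemeasurable).symm
    _ ≤ ∫⁻ x in Set.Ico (0 : ℝ) 1, slNorm a * sqFn b x ^ (1 / 2 : ℝ) :=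
        lintegral_mono fun x => (tsum_indicator_abs_mul_le a b x).trans
          (mul_le_mul_left (sqrt_sqFn_le_slNorm a x) _)
    _ = slNorm a * h1Norm b :=
        lintegral_const_mul _ ((Measurable.tsum fun I =>
          measurable_const.indicator (measurableSet_dint I)).pow_const _)

lemma pairing_neg (a b : Dy → ℝ) : pairing (-a) b = -pairing a b := by
  simp only [pairing, Pi.neg_apply, neg_mul, tsum_neg]

lemma pairing_sum {ι : Type*} (s : Finset ι) (A : ι → Dy → ℝ) (b : Dy → ℝ)
    (h : ∀ j ∈ s, Summable fun I => A j I * b I * dlen I) :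
    pairing (∑ j ∈ s, A j) b = ∑ j ∈ s, pairing (A j) b := by
  simp only [pairing, Finset.sum_apply, Finset.sum_mul]
  exact Summable.tsum_finsetSum h

variable {a b : Dy → ℝ}

lemma summable_pairing (ha : slNorm a ≠ ⊤) (hb : h1Norm b ≠ ⊤) :
    Summable fun I => a I * b I * dlen I := by
  refine Summable.of_abs ((ENNReal.summable_toReal ?_).congr fun I =>
    ENNReal.toReal_ofReal (abs_nonneg _))
  exact ne_top_of_le_ne_top (ENNReal.mul_ne_top ha hb) (tsum_ofReal_abs_le_slNorm_mul_h1Norm a b)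

lemma abs_pairing_le (ha : slNorm a ≠ ⊤) (hb : h1Norm b ≠ ⊤) :
    |pairing a b| ≤ (slNorm a).toReal * (h1Norm b).toReal := by
  have hsum := (summable_pairing ha hb).abs
  calc |pairing a b| ≤ ∑' I, |a I * b I * dlen I| :=
        norm_tsum_le_tsum_norm (summable_pairing ha hb).norm
    _ = (∑' I, ENNReal.ofReal |a I * b I * dlen I|).toReal := by
        rw [← ENNReal.ofReal_tsum_of_nonneg (fun I => abs_nonneg _) hsum,
          ENNReal.toReal_ofReal (tsum_nonneg fun I => abs_nonneg _)]
    _ ≤ (slNorm a).toReal * (h1Norm b).toReal := by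
        rw [← ENNReal.toReal_mul]
        exact ENNReal.toReal_mono (ENNReal.mul_ne_top ha hb)
          (tsum_ofReal_abs_le_slNorm_mul_h1Norm a b)

end Duality

section LevelProjection

lemma levProj_neg (Λ : Set ℕ) (a : Dy → ℝ) : levProj Λ (-a) = -levProj Λ a := by
  ext I
  by_cases h : dlev I ∈ Λ <;> simp [levProj, h]

lemma sq_levProj_le (Λ : Set ℕ) (a : Dy → ℝ) (I : Dy) : levProj Λ a I ^ 2 ≤ a I ^ 2 := by
  by_cases h : dlev I ∈ Λ <;> simp [levProj, h, sq_nonneg]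

lemma slNorm_levProj_le (Λ : Set ℕ) (a : Dy → ℝ) : slNorm (levProj Λ a) ≤ slNorm a :=
  slNorm_mono (sq_levProj_le Λ a)

variable {ι : Type*} [Fintype ι] {Λ : ι → Set ℕ}

lemma sq_sum_levProj (hΛ : Pairwise (Disjoint on Λ)) (f : ι → Dy → ℝ) (I : Dy) :
    (∑ j, levProj (Λ j) (f j) I) ^ 2 = ∑ j, levProj (Λ j) (f j) I ^ 2 := by
  by_cases hI : ∃ j₀, dlev I ∈ Λ j₀
  · obtain ⟨j₀, hj₀⟩ := hI
    have hzero : ∀ j, j ≠ j₀ → levProj (Λ j) (f j) I = 0 := fun j hj => by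
      have : dlev I ∉ Λ j := fun h => (hΛ hj).ne_of_mem h hj₀ rfl
      simp [levProj, this]
    rw [Fintype.sum_eq_single j₀ hzero,
      Fintype.sum_eq_single j₀ fun j hj => by rw [hzero j hj, sq, mul_zero]]
  · push Not at hI
    simp [levProj, hI]

lemma sqFn_sum_levProj (hΛ : Pairwise (Disjoint on Λ)) (f : ι → Dy → ℝ) (x : ℝ) :
    sqFn (∑ j, levProj (Λ j) (f j)) x = ∑ j, sqFn (levProj (Λ j) (f j)) x := by
  simp only [sqFn, Finset.sum_apply, sq_sum_levProj hΛ]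
  rw [← Summable.tsum_finsetSum fun j _ => ENNReal.summable]
  congr 1 with I
  by_cases hx : x ∈ dint I
  · simp only [Set.indicator_of_mem hx]
    exact ENNReal.ofReal_sum_of_nonneg fun j _ => sq_nonneg _
  · simp [hx]

lemma slNorm_sum_levProj_sq_le (hΛ : Pairwise (Disjoint on Λ)) (f : ι → Dy → ℝ) :
    slNorm (∑ j, levProj (Λ j) (f j)) ^ 2 ≤ ∑ j, slNorm (f j) ^ 2 := by
  simp only [slNorm_sq, sqFn_sum_levProj hΛ]
  exact iSup_le fun x => Finset.sum_le_sum fun j _ =>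
    (sqFn_mono (sq_levProj_le (Λ j) (f j)) x).trans (le_iSup (sqFn (f j)) x)

end LevelProjection

section BoundedOperator

variable {T : (Dy → ℝ) →ₗ[ℝ] (Dy → ℝ)} {C : NNReal} {ι : Type*} [Fintype ι] {Λ : ι → Set ℕ}
  {f : ι → Dy → ℝ}

lemma slNorm_map_sum_levProj_sq_le (hT : ∀ f, slNorm (T f) ≤ (C : ℝ≥0∞) * slNorm f)
    (hΛ : Pairwise (Disjoint on Λ)) (hf : ∀ j, slNorm (f j) ≤ 1) :
    slNorm (T (∑ j, levProj (Λ j) (f j))) ^ 2 ≤ (C : ℝ≥0∞) ^ 2 * Fintype.card ι := calc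
  _ ≤ ((C : ℝ≥0∞) * slNorm (∑ j, levProj (Λ j) (f j))) ^ 2 := by gcongr; exact hT _
  _ ≤ (C : ℝ≥0∞) ^ 2 * ∑ _j : ι, 1 := by
      rw [mul_pow]
      gcongr
      exact (slNorm_sum_levProj_sq_le hΛ f).trans
        (Finset.sum_le_sum fun j _ => pow_le_one₀ zero_le (hf j))
  _ = (C : ℝ≥0∞) ^ 2 * Fintype.card ι := by simp

lemma sum_pairing_levProj_le (hT : ∀ f, slNorm (T f) ≤ (C : ℝ≥0∞) * slNorm f) {g : Dy → ℝ}
    (hg : h1Norm g ≠ ⊤) (hΛ : Pairwise (Disjoint on Λ)) (hf : ∀ j, slNorm (f j) ≤ 1) :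
    ∑ j, pairing (T (levProj (Λ j) (f j))) g ≤ C * √(Fintype.card ι) * (h1Norm g).toReal := by
  set F := ∑ j, levProj (Λ j) (f j)
  have hTF := slNorm_map_sum_levProj_sq_le hT hΛ hf
  have hTF_ne_top : slNorm (T F) ≠ ⊤ :=
    (ENNReal.pow_ne_top_iff.mp (ne_top_of_le_ne_top (by finiteness) hTF)).resolve_right two_ne_zero
  have hTF_le : (slNorm (T F)).toReal ≤ C * √(Fintype.card ι) := by
    rw [← Real.sqrt_sq C.coe_nonneg, ← Real.sqrt_mul (sq_nonneg _)]
    exact Real.le_sqrt_of_sq_le (by simpa only [ENNReal.toReal_pow, ENNReal.toReal_mul,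
      ENNReal.coe_toReal, ENNReal.toReal_natCast] using ENNReal.toReal_mono (by finiteness) hTF)
  have hsummable : ∀ j ∈ Finset.univ,
      Summable fun I => T (levProj (Λ j) (f j)) I * g I * dlen I := fun j _ => by
    refine summable_pairing (ne_top_of_le_ne_top (b := (C : ℝ≥0∞) * 1) (by finiteness) ?_) hg
    exact (hT _).trans (by gcongr; exact (slNorm_levProj_le _ _).trans (hf j))
  calc ∑ j, pairing (T (levProj (Λ j) (f j))) g = pairing (T F) g := by
        rw [map_sum, pairing_sum _ _ _ hsummable]
    _ ≤ (slNorm (T F)).toReal * (h1Norm g).toReal :=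
        (le_abs_self _).trans (abs_pairing_le hTF_ne_top hg)
    _ ≤ C * √(Fintype.card ι) * (h1Norm g).toReal := by gcongr

end BoundedOperator

lemma exists_pairing_levProj_gt (T : (Dy → ℝ) →ₗ[ℝ] (Dy → ℝ)) {Λ : Set ℕ} {g : Dy → ℝ} {c : ℝ}
    (h : ∃ f, slNorm f ≤ 1 ∧ c < |pairing (T (levProj Λ f)) g|) :
    ∃ f, slNorm f ≤ 1 ∧ c < pairing (T (levProj Λ f)) g := by
  obtain ⟨f, hf, hc⟩ := h
  rcases lt_abs.mp hc with hpos | hneg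
  · exact ⟨f, hf, hpos⟩
  · exact ⟨-f, by rwa [slNorm_neg], by rwa [levProj_neg, map_neg, pairing_neg]⟩

/-- the sieve lemma: given η > 0, g ∈ H^1, an infinite Γ ⊂ ℕ and a bounded
operator T on SL^∞, there is an infinite Λ ⊂ Γ with
sup_{‖f‖_{SL^∞} ≤ 1} |⟨T P_Λ f, g⟩| ≤ η ‖g‖_{H^1}. -/
theorem sieve_lemma (η : ℝ) (hη : 0 < η) (g : Dy → ℝ) (hg : h1Norm g ≠ ⊤)
    (Γ : Set ℕ) (hΓ : Γ.Infinite)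
    (T : (Dy → ℝ) →ₗ[ℝ] (Dy → ℝ)) (C : NNReal)
    (hT : ∀ f : Dy → ℝ, slNorm (T f) ≤ (C : ℝ≥0∞) * slNorm f) :
    ∃ Λ : Set ℕ, Λ ⊆ Γ ∧ Λ.Infinite ∧
      ∀ f : Dy → ℝ, slNorm f ≤ 1 →
        |pairing (T (levProj Λ f)) g| ≤ η * (h1Norm g).toReal := by
  by_contra! hbad
  obtain ⟨k, hk⟩ := exists_nat_gt ((C / η) ^ 2)
  have hk0 : 0 < k := by exact_mod_cast (sq_nonneg _).trans_lt hk
  have hCk : (C : ℝ) < η * √k := (div_lt_iff₀' hη).mp (Real.lt_sqrt_of_sq_lt hk)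
  obtain ⟨Λ, hΛΓ, hΛ, hdisj⟩ := hΓ.exists_pairwise_disjoint_infinite_subsets k
  choose f hf hfg using fun j => exists_pairing_levProj_gt T (hbad (Λ j) (hΛΓ j) (hΛ j))
  have hG : 0 ≤ (h1Norm g).toReal := ENNReal.toReal_nonneg
  refine lt_irrefl (k * (η * (h1Norm g).toReal)) ?_
  calc k * (η * (h1Norm g).toReal) = ∑ _j : Fin k, η * (h1Norm g).toReal := by simp
    _ < ∑ j, pairing (T (levProj (Λ j) (f j))) g :=
        Finset.sum_lt_sum_of_nonempty ⟨⟨0, hk0⟩, Finset.mem_univ _⟩ fun j _ => hfg j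
    _ ≤ C * √k * (h1Norm g).toReal := by
        simpa using sum_pairing_levProj_le hT hg hdisj hf
    _ ≤ η * √k * √k * (h1Norm g).toReal := by gcongr
    _ = k * (η * (h1Norm g).toReal) := by rw [mul_assoc η, Real.mul_self_sqrt k.cast_nonneg]; ring

end
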